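/- In a connected graph where every cycle-space basis element can be generated by triangles—in particular in a complete graph on n ≥ 3 vertices—every curl-free flow is a gradient flow: if C^T f = 0 then f = B^T y for some y ∈ ℝ^n. Equivalently, for the complete graph, ker(C^T) = im(B^T). -/
import Mathlib


open Matrix

theorem stmt_18 (n : ℕ) (hn : 3 ≤ n)
    (B : Matrix (Fin n) {p : Fin n × Fin n // p.1 < p.2} ℝ)
    (hB : ∀ k e, B k e = if k = e.1.1 then 1 else if k = e.1.2 then -1 else 0)
    (C : Matrix {p : Fin n × Fin n // p.1 < p.2}
        {t : Fin n × Fin n × Fin n // t.1 < t.2.1 ∧ t.2.1 < t.2.2} ℝ)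
    (hC : ∀ e t, C e t =
      if (e : Fin n × Fin n) = ((t : Fin n × Fin n × Fin n).1,
          (t : Fin n × Fin n × Fin n).2.1) then 1
      else if (e : Fin n × Fin n) = ((t : Fin n × Fin n × Fin n).2.1,
          (t : Fin n × Fin n × Fin n).2.2) then 1
      else if (e : Fin n × Fin n) = ((t : Fin n × Fin n × Fin n).1,
          (t : Fin n × Fin n × Fin n).2.2) then -1 else 0) :
    LinearMap.ker Cᵀ.mulVecLin = LinearMap.range Bᵀ.mulVecLin := by
  haveI : NeZero n := ⟨by omega⟩
  have hBv : ∀ (y : Fin n → ℝ) (e : {p : Fin n × Fin n // p.1 < p.2}),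
      Bᵀ.mulVec y e = y e.1.1 - y e.1.2 := by
    intro y e
    obtain ⟨⟨i, j⟩, hij⟩ := e
    have hne : i ≠ j := ne_of_lt hij
    have key : ∀ k : Fin n, Bᵀ ⟨(i, j), hij⟩ k * y k
        = (if k = i then y i else 0) + (if k = j then -(y j) else 0) := by
      intro k
      simp only [transpose_apply, hB]
      by_cases h1 : k = i
      · subst h1; simp [hne]
      · by_cases h2 : k = j
        · subst h2; simp [h1]
        · simp [h1, h2]
    simp only [mulVec, dotProduct]
    rw [Finset.sum_congr rfl fun k _ => key k]
    simp [Finset.sum_add_distrib, Finset.sum_ite_eq', sub_eq_add_neg]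
  have hCv : ∀ (g : {p : Fin n × Fin n // p.1 < p.2} → ℝ) (i j k : Fin n)
      (hij : i < j) (hjk : j < k),
      Cᵀ.mulVec g ⟨(i, j, k), hij, hjk⟩ =
        g ⟨(i, j), hij⟩ + g ⟨(j, k), hjk⟩ - g ⟨(i, k), hij.trans hjk⟩ := by
    intro g i j k hij hjk
    have h1 : i ≠ j := ne_of_lt hij
    have h2 : j ≠ k := ne_of_lt hjk
    have h3 : i ≠ k := ne_of_lt (hij.trans hjk)
    have key : ∀ e : {p : Fin n × Fin n // p.1 < p.2},
        Cᵀ ⟨(i, j, k), hij, hjk⟩ e * g e =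
        (if e = ⟨(i, j), hij⟩ then g ⟨(i, j), hij⟩ else 0)
      + (if e = ⟨(j, k), hjk⟩ then g ⟨(j, k), hjk⟩ else 0)
      + (if e = ⟨(i, k), hij.trans hjk⟩ then -(g ⟨(i, k), hij.trans hjk⟩) else 0) := by
      intro e
      obtain ⟨⟨a, b⟩, hab⟩ := e
      simp only [transpose_apply, hC, Subtype.mk.injEq, Prod.mk.injEq]
      by_cases e1 : a = i ∧ b = j
      · obtain ⟨rfl, rfl⟩ := e1
        simp [h1, h2, Ne.symm h1]
      · by_cases e2 : a = j ∧ b = k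
        · obtain ⟨rfl, rfl⟩ := e2
          simp [Ne.symm h1, Ne.symm h2, h2, e1]
        · by_cases e3 : a = i ∧ b = k
          · obtain ⟨rfl, rfl⟩ := e3
            simp [Ne.symm h2, h1, e1, e2]
          · simp [e1, e2, e3]
    simp only [mulVec, dotProduct]
    rw [Finset.sum_congr rfl fun e _ => key e]
    simp [Finset.sum_add_distrib, Finset.sum_ite_eq', sub_eq_add_neg]
  ext f
  simp only [LinearMap.mem_ker, LinearMap.mem_range, mulVecLin_apply]
  constructor
  · intro hf
    have hcurl : ∀ (i j k : Fin n) (hij : i < j) (hjk : j < k),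
        f ⟨(i, j), hij⟩ + f ⟨(j, k), hjk⟩ - f ⟨(i, k), hij.trans hjk⟩ = 0 := by
      intro i j k hij hjk
      have h := congrFun hf ⟨(i, j, k), hij, hjk⟩
      rw [hCv f i j k hij hjk] at h
      simpa using h
    refine ⟨fun k => if h : (0 : Fin n) < k then -f ⟨((0 : Fin n), k), h⟩ else 0, ?_⟩
    funext e
    obtain ⟨⟨i, j⟩, hij⟩ := e
    rw [hBv]
    simp only
    by_cases hi : (0 : Fin n) < i
    · have hj : (0 : Fin n) < j := hi.trans hij
      have h := hcurl 0 i j hi hij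
      rw [dif_pos hi, dif_pos hj]
      linarith
    · have hi0 : i = 0 := by
        exact le_antisymm (not_lt.mp hi) (Fin.zero_le i)
      subst hi0
      rw [dif_neg (lt_irrefl _), dif_pos hij]
      ring
  · rintro ⟨y, rfl⟩
    funext t
    obtain ⟨⟨i, j, k⟩, hij, hjk⟩ := t
    have := hCv (Bᵀ.mulVec y) i j k hij hjk
    rw [Pi.zero_apply, this, hBv, hBv, hBv]
    ring
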